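/- Let W ∈ ℤ^n satisfy the stated conditions, with R = {i : W_i < 0} and m = n − |R|. Then the number of sequences A = (A_1, …, A_n) of positive integers with no stale duplicates such that B̄_{A,i} = W_i for all i equals M(G(W)) · ∏_{i ∈ R} |W_i|, where M(G(W)) denotes the number of perfect matchings of the bipartite graph G(W). In particular, such a sequence A exists if and only if G(W) has a perfect matching. -/

import Mathlib

/-- `ACK A i` is the acknowledgement after the first `i` packets of the 1-indexed
sequence `A`: the least positive integer not among `A 1, …, A i`.
In particular `ACK A 0 = 1`. -/
noncomputable def ACK (A : ℕ → ℕ) (i : ℕ) : ℕ :=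
  sInf {k : ℕ | 0 < k ∧ ∀ j, 1 ≤ j → j ≤ i → A j ≠ k}

/-- `bufSize A i` is the buffer size after the first `i` packets of the 1-indexed
sequence `A`: the number of distinct values among `A 1, …, A i` that are
`≥ ACK A i`. In particular `bufSize A 0 = 0`. -/
noncomputable def bufSize (A : ℕ → ℕ) (i : ℕ) : ℕ :=
  (((Finset.Icc 1 i).image A).filter (fun v => ACK A i ≤ v)).card

/-- `A` (1-indexed) is a permutation of `{1, …, n}`: every integer in `{1, …, n}`
occurs exactly once among `A 1, …, A n`. -/
def IsPermSeq (n : ℕ) (A : ℕ → ℕ) : Prop :=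
  Set.BijOn A (Set.Icc 1 n) (Set.Icc 1 n)

/-- Position `i` of `A` is a repeat: `A_i ∈ {A_1, …, A_{i-1}}`. -/
def IsRepeat (A : ℕ → ℕ) (i : ℕ) : Prop :=
  ∃ j, 1 ≤ j ∧ j < i ∧ A j = A i

open Classical in
/-- The modified buffer sequence `B̄(A)`: `B̄_{A,i} = -B_{A,i}` if `i` is a
repeat position, and `B̄_{A,i} = B_{A,i}` otherwise. -/
noncomputable def mbuf (A : ℕ → ℕ) (i : ℕ) : ℤ :=
  if IsRepeat A i then -(bufSize A i : ℤ) else (bufSize A i : ℤ)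

/-- `A` has no stale duplicates: every repeated packet is a repeat of a
still-buffered packet, i.e. `A_i ≥ ACK_{A,i-1}` at every repeat position
`1 ≤ i ≤ n` (duplicates of already uploaded packets are discarded). -/
def NoStaleDup (n : ℕ) (A : ℕ → ℕ) : Prop :=
  ∀ i, 1 ≤ i → i ≤ n → IsRepeat A i → ACK A (i - 1) ≤ A i

/-- `seqOf n A` is the 1-indexed sequence (of length `n`) of packet IDs
associated with the tuple `A : Fin n → ℕ` (value `0` outside `{1, …, n}`). -/
def seqOf (n : ℕ) (A : Fin n → ℕ) : ℕ → ℕ :=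
  fun i => if h : 1 ≤ i ∧ i ≤ n then A ⟨i - 1, by omega⟩ else 0

/-- `R = {i ∈ {1, …, n} : W_i < 0}`, the set of stages of a candidate modified
buffer sequence at which a repeat packet arrives. -/
def RSet (n : ℕ) (W : ℕ → ℤ) : Finset ℕ :=
  (Finset.Icc 1 n).filter (fun i => W i < 0)

/-- The acknowledgement sequence reconstructed from a candidate modified buffer
sequence `W : ℕ → ℤ` (with the convention `W 0 = 0`): `ACK_0 = 1` and, for
`i ≥ 1`, `ACK_i = ACK_{i-1}` if `W_i < 0` (a repeat); otherwise
`ACK_i = ACK_{i-1}` if `|W_i| = |W_{i-1}| + 1`,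
`ACK_i = ACK_{i-1} + |W_{i-1}| - |W_i| + 1` if `|W_i| < |W_{i-1}|`, and
`ACK_i = ACK_{i-1} + 1` if `|W_i| = |W_{i-1}|`. -/
def ackOfMW (W : ℕ → ℤ) : ℕ → ℕ
  | 0 => 1
  | i + 1 =>
      if W (i + 1) < 0 then ackOfMW W i
      else if (W (i + 1)).natAbs = (W i).natAbs + 1 then ackOfMW W i
      else if (W (i + 1)).natAbs < (W i).natAbs then
        ackOfMW W i + ((W i).natAbs - (W (i + 1)).natAbs) + 1
      else ackOfMW W i + 1

/-- `S_1 = {i ∈ {1, …, n} : i ∉ R and |W_i| = |W_{i-1}| + 1}`, the set of stages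
at which a new out-of-order packet is received. -/
def S1M (n : ℕ) (W : ℕ → ℤ) : Finset ℕ :=
  (Finset.Icc 1 n).filter
    (fun i => ¬ W i < 0 ∧ (W i).natAbs = (W (i - 1)).natAbs + 1)

/-- `V_2 = {1, …, m} \ {ACK_{i-1} : i ∉ S_1 and i ∉ R}`, where `m = n - |R|`:
the right vertex set of the bipartite graph `G(W)` (the left vertex set is
`V_1 = S_1`). -/
def V2M (n : ℕ) (W : ℕ → ℤ) : Finset ℕ :=
  Finset.Icc 1 (n - (RSet n W).card) \
    (((Finset.Icc 1 n).filter
        (fun i => ¬ (¬ W i < 0 ∧ (W i).natAbs = (W (i - 1)).natAbs + 1) ∧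
          ¬ W i < 0)).image
      (fun i => ackOfMW W (i - 1)))

/-- `M` is a perfect matching of the bipartite graph `G(W)` on `(V_1, V_2)`,
where `i ∈ V_1 = S_1` is adjacent to `j ∈ V_2` iff `j > ACK_i`: `M` is a set of
pairwise disjoint edges covering all of `V_1` and `V_2`. -/
def IsPerfectMatchingM (n : ℕ) (W : ℕ → ℤ) (M : Finset (ℕ × ℕ)) : Prop :=
  (∀ p ∈ M, p.1 ∈ S1M n W ∧ p.2 ∈ V2M n W ∧ ackOfMW W p.1 < p.2) ∧
  (∀ i ∈ S1M n W, ∃! j : ℕ, (i, j) ∈ M) ∧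
  (∀ j ∈ V2M n W, ∃! i : ℕ, (i, j) ∈ M)

/-- The preimage `B̄⁻¹(W)`: the set of sequences `A = (A_1, …, A_n)` of positive
integers, with no stale duplicates, whose modified buffer sequence is `W`. -/
def mbufPreimage (n : ℕ) (W : ℕ → ℤ) : Set (Fin n → ℕ) :=
  {A | (∀ k, 0 < A k) ∧ NoStaleDup n (seqOf n A) ∧
       ∀ i, 1 ≤ i → i ≤ n → mbuf (seqOf n A) i = W i}

/-!
The sign of `W_i` says whether stage `i` is a repeat, and `ACK_i - 1 + B_i` counts the distinct
packets received, i.e. the `i - |R ∩ [1, i]|` non-repeats up to stage `i`; hence every `A` in the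
preimage has the acknowledgements `ackOfMW W`. A new packet is then either the awaited one,
`ACK_{i-1}` (the buffer does not grow), or lies above `ACK_i` (the buffer grows: `i ∈ S₁`), and
the packets of the second kind are exactly the values in `V₂`; so `i ↦ A_i` on `S₁` is a perfect
matching of `G(W)`. A repeat resends one of the `|W_i|` buffered packets, recorded by its rank in
the buffer. Conversely, a perfect matching and a choice of ranks decode to a sequence in the
preimage, and encoding and decoding are inverse to each other.
-/

lemma Monotone.exists_eq_lt_succ {f : ℕ → ℕ} (hf : Monotone f) {i n : ℕ}
    (h : f i < f n) : ∃ t, i ≤ t ∧ t < n ∧ f t = f i ∧ f i < f (t + 1) := by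
  induction n with
  | zero => exact absurd (hf (Nat.zero_le i)) (not_le.2 h)
  | succ k ih =>
    by_cases hk : f i < f k
    · obtain ⟨t, hit, htk, hft, hlt⟩ := ih hk
      exact ⟨t, hit, by omega, hft, hlt⟩
    · have hik : i ≤ k := by
        by_contra! hki
        exact absurd (hf hki) (not_le.2 h)
      exact ⟨k, hik, by omega, le_antisymm (not_lt.1 hk) (hf hik), h⟩

namespace PacketBuffer

open Finset

section Sequence

variable {A : ℕ → ℕ} {i j k v : ℕ}

def received (A : ℕ → ℕ) (i : ℕ) : Finset ℕ := (Icc 1 i).image A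

noncomputable def buffer (A : ℕ → ℕ) (i : ℕ) : Finset ℕ := (received A i).filter (ACK A i ≤ ·)

lemma bufSize_eq_card_buffer : bufSize A i = #(buffer A i) := rfl

lemma mem_received : v ∈ received A i ↔ ∃ j, 1 ≤ j ∧ j ≤ i ∧ A j = v := by
  simp [received, and_assoc]

@[simp] lemma received_zero : received A 0 = ∅ := by simp [received]

lemma received_succ : received A (i + 1) = insert (A (i + 1)) (received A i) := by
  rw [received, ← insert_Icc_right_eq_Icc_add_one (by omega), image_insert, received]

lemma received_mono : Monotone (received A) :=
  fun _ _ h => image_subset_image (Icc_subset_Icc_right h)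

lemma received_congr {A' : ℕ → ℕ} (h : ∀ j, 1 ≤ j → j ≤ i → A j = A' j) :
    received A i = received A' i :=
  image_congr fun j hj => h j (mem_Icc.1 hj).1 (mem_Icc.1 hj).2

lemma isRepeat_succ_iff : IsRepeat A (i + 1) ↔ A (i + 1) ∈ received A i := by
  simp only [IsRepeat, mem_received, Nat.lt_succ_iff]

lemma ne_of_not_isRepeat (h : ¬ IsRepeat A i) (hj : 1 ≤ j) (hji : j < i) : A j ≠ A i :=
  fun he => h ⟨j, hj, hji, he⟩

lemma ACK_eq_sInf_received : ACK A i = sInf {k | 0 < k ∧ k ∉ received A i} := by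
  simp only [ACK, mem_received, not_exists, not_and]

lemma nonempty_setOf_notMem_received : {k | 0 < k ∧ k ∉ received A i}.Nonempty :=
  ⟨(received A i).sup id + 1, Nat.succ_pos _,
    fun h => (Finset.le_sup (f := id) h).not_gt (Nat.lt_succ_self _)⟩

lemma ACK_pos : 0 < ACK A i := by
  rw [ACK_eq_sInf_received]; exact (Nat.sInf_mem nonempty_setOf_notMem_received).1

lemma ACK_notMem_received : ACK A i ∉ received A i := by
  rw [ACK_eq_sInf_received]; exact (Nat.sInf_mem nonempty_setOf_notMem_received).2

lemma mem_received_of_lt_ACK (hk : 0 < k) (h : k < ACK A i) : k ∈ received A i := by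
  rw [ACK_eq_sInf_received] at h
  by_contra hk'
  exact Nat.notMem_of_lt_sInf h ⟨hk, hk'⟩

lemma ACK_eq_iff :
    ACK A i = k ↔ 0 < k ∧ k ∉ received A i ∧ ∀ l, 0 < l → l < k → l ∈ received A i := by
  refine ⟨?_, fun ⟨hk, hnot, hall⟩ => ?_⟩
  · rintro rfl
    exact ⟨ACK_pos, ACK_notMem_received, fun l hl h => mem_received_of_lt_ACK hl h⟩
  · rcases lt_trichotomy (ACK A i) k with h | h | h
    · exact absurd (hall _ ACK_pos h) ACK_notMem_received
    · exact h
    · exact absurd (mem_received_of_lt_ACK hk h) hnot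

lemma ACK_congr {A' : ℕ → ℕ} {i' : ℕ} (h : received A i = received A' i') :
    ACK A i = ACK A' i' := by
  rw [ACK_eq_sInf_received, ACK_eq_sInf_received, h]

lemma buffer_congr {A' : ℕ → ℕ} {i' : ℕ} (h : received A i = received A' i') :
    buffer A i = buffer A' i' := by
  rw [buffer, buffer, h, ACK_congr h]

lemma ACK_mono : Monotone (ACK A) := fun i j hij => by
  by_contra! hlt
  exact ACK_notMem_received (received_mono hij (mem_received_of_lt_ACK ACK_pos hlt))

lemma ACK_le_of_notMem_received (hv : 0 < v) (h : v ∉ received A i) : ACK A i ≤ v :=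
  not_lt.1 fun hlt => h (mem_received_of_lt_ACK hv hlt)

lemma ACK_succ_of_ne (h : A (i + 1) ≠ ACK A i) : ACK A (i + 1) = ACK A i := by
  rw [ACK_eq_iff, received_succ]
  refine ⟨ACK_pos, ?_, fun l hl hlt => mem_insert_of_mem (mem_received_of_lt_ACK hl hlt)⟩
  rw [mem_insert, not_or]
  exact ⟨Ne.symm h, ACK_notMem_received⟩

lemma ACK_lt_ACK_succ (h : A (i + 1) = ACK A i) : ACK A i < ACK A (i + 1) := by
  refine lt_of_le_of_ne (ACK_mono (Nat.le_succ i)) fun he => ?_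
  have hmem : ACK A (i + 1) ∈ received A (i + 1) := by
    rw [received_succ, ← he, ← h]
    exact mem_insert_self _ _
  exact ACK_notMem_received hmem

lemma buffer_succ_of_isRepeat (h : IsRepeat A (i + 1)) : buffer A (i + 1) = buffer A i := by
  have hr : received A (i + 1) = received A i :=
    received_succ.trans (insert_eq_of_mem (isRepeat_succ_iff.1 h))
  exact buffer_congr hr

lemma exists_not_isRepeat_of_mem_received (h : v ∈ received A i) :
    ∃ j, 1 ≤ j ∧ j ≤ i ∧ A j = v ∧ ¬ IsRepeat A j := by
  induction i with
  | zero => simp at h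
  | succ t ih =>
    by_cases hv : v ∈ received A t
    · obtain ⟨j, h1, h2, h3, h4⟩ := ih hv
      exact ⟨j, h1, by omega, h3, h4⟩
    · rw [received_succ, mem_insert] at h
      obtain rfl := h.resolve_right hv
      exact ⟨t + 1, by omega, le_rfl, rfl, fun h' => hv (isRepeat_succ_iff.1 h')⟩

lemma card_received (hpos : ∀ v ∈ received A i, 0 < v) :
    #(received A i) = ACK A i - 1 + bufSize A i := by
  have hlow : (received A i).filter (· < ACK A i) = Icc 1 (ACK A i - 1) := by
    ext v
    simp only [mem_filter, mem_Icc]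
    constructor
    · rintro ⟨hv, hlt⟩
      exact ⟨hpos v hv, by omega⟩
    · rintro ⟨h1, h2⟩
      have hlt : v < ACK A i := by have := ACK_pos (A := A) (i := i); omega
      exact ⟨mem_received_of_lt_ACK h1 hlt, hlt⟩
  rw [bufSize_eq_card_buffer, buffer, ← card_filter_add_card_filter_not (p := (· < ACK A i))]
  simp only [hlow, Nat.card_Icc, not_lt]
  omega

end Sequence

section Stages

variable {n : ℕ} {W : ℕ → ℤ} {i j t : ℕ}

def inOrderStages (n : ℕ) (W : ℕ → ℤ) : Finset ℕ :=
  (Icc 1 n).filter (fun i => ¬ W i < 0 ∧ (W i).natAbs ≠ (W (i - 1)).natAbs + 1)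

lemma mem_RSet : i ∈ RSet n W ↔ 1 ≤ i ∧ i ≤ n ∧ W i < 0 := by
  simp [RSet, and_assoc]

lemma mem_S1M :
    i ∈ S1M n W ↔ 1 ≤ i ∧ i ≤ n ∧ ¬ W i < 0 ∧ (W i).natAbs = (W (i - 1)).natAbs + 1 := by
  simp only [S1M, mem_filter, mem_Icc, and_assoc]

lemma mem_inOrderStages :
    i ∈ inOrderStages n W ↔
      1 ≤ i ∧ i ≤ n ∧ ¬ W i < 0 ∧ (W i).natAbs ≠ (W (i - 1)).natAbs + 1 := by
  simp only [inOrderStages, mem_filter, mem_Icc, and_assoc]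

lemma mem_V2M : j ∈ V2M n W ↔
    1 ≤ j ∧ j ≤ n - #(RSet n W) ∧ ∀ i ∈ inOrderStages n W, ackOfMW W (i - 1) ≠ j := by
  simp only [V2M, inOrderStages, mem_sdiff, mem_Icc, mem_image, mem_filter, not_exists,
    not_and, and_assoc]
  refine and_congr_right' (and_congr_right' (forall_congr' fun i => ?_))
  tauto

lemma mem_RSet_or_mem_S1M_or_mem_inOrderStages (h1 : 1 ≤ i) (h2 : i ≤ n) :
    i ∈ RSet n W ∨ i ∈ S1M n W ∨ i ∈ inOrderStages n W := by
  rw [mem_RSet, mem_S1M, mem_inOrderStages]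
  tauto

lemma notMem_inOrderStages_of_mem_S1M (h : i ∈ S1M n W) : i ∉ inOrderStages n W :=
  fun h' => (mem_inOrderStages.1 h').2.2.2 (mem_S1M.1 h).2.2.2

lemma card_RSet_succ : #(RSet (t + 1) W) = #(RSet t W) + if W (t + 1) < 0 then 1 else 0 := by
  rw [RSet, ← insert_Icc_right_eq_Icc_add_one (by omega), filter_insert]
  split_ifs with h
  · exact card_insert_of_notMem (by simp)
  · rfl

lemma ackOfMW_succ_of_neg (h : W (t + 1) < 0) : ackOfMW W (t + 1) = ackOfMW W t := by
  simp [ackOfMW, h]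

lemma ackOfMW_succ_of_natAbs_eq (h : ¬ W (t + 1) < 0)
    (h2 : (W (t + 1)).natAbs = (W t).natAbs + 1) : ackOfMW W (t + 1) = ackOfMW W t := by
  simp [ackOfMW, h, h2]

lemma ackOfMW_succ_of_natAbs_le (h : ¬ W (t + 1) < 0)
    (h2 : (W (t + 1)).natAbs ≤ (W t).natAbs) :
    ackOfMW W (t + 1) = ackOfMW W t + ((W t).natAbs - (W (t + 1)).natAbs) + 1 := by
  simp only [ackOfMW, if_neg h, if_neg (show (W (t + 1)).natAbs ≠ (W t).natAbs + 1 by omega)]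
  split_ifs <;> omega

lemma ackOfMW_lt_succ (h : ¬ W (t + 1) < 0) (h2 : (W (t + 1)).natAbs ≠ (W t).natAbs + 1) :
    ackOfMW W t < ackOfMW W (t + 1) := by
  simp only [ackOfMW, if_neg h, if_neg h2]
  split_ifs <;> omega

lemma ackOfMW_mono : Monotone (ackOfMW W) := by
  refine monotone_nat_of_le_succ fun t => ?_
  simp only [ackOfMW]
  split_ifs <;> omega

lemma one_le_ackOfMW : 1 ≤ ackOfMW W i := ackOfMW_mono (Nat.zero_le i)

variable (hW0 : W 0 = 0) (hWn : W n = 0)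
  (hrep : ∀ i ∈ RSet n W, (W i).natAbs = (W (i - 1)).natAbs)
  (hstep : ∀ i, 1 ≤ i → i ≤ n → i ∉ RSet n W → (W i).natAbs ≤ (W (i - 1)).natAbs + 1)

include hrep in
lemma natAbs_succ_of_neg (ht : t + 1 ≤ n) (h : W (t + 1) < 0) :
    (W (t + 1)).natAbs = (W t).natAbs :=
  hrep (t + 1) (mem_RSet.2 ⟨by omega, ht, h⟩)

include hstep in
lemma natAbs_succ_le (ht : t + 1 ≤ n) (h : ¬ W (t + 1) < 0) :
    (W (t + 1)).natAbs ≤ (W t).natAbs + 1 :=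
  hstep (t + 1) (by omega) ht fun hR => h (mem_RSet.1 hR).2.2

include hW0 hrep hstep in
/-- Mirrors `card_received`: `ACK_i - 1 + B_i` is the number `i - |R ∩ [1, i]|` of distinct
packets received by stage `i`. -/
lemma ackOfMW_add_natAbs_add_card_RSet (hi : i ≤ n) :
    ackOfMW W i + (W i).natAbs + #(RSet i W) = 1 + i := by
  induction i with
  | zero => simp [hW0, RSet, ackOfMW]
  | succ t ih =>
    have ih := ih (by omega)
    rw [card_RSet_succ]
    by_cases hneg : W (t + 1) < 0
    · rw [ackOfMW_succ_of_neg hneg, natAbs_succ_of_neg hrep hi hneg, if_pos hneg]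
      omega
    · have hle := natAbs_succ_le hstep hi hneg
      rw [if_neg hneg]
      by_cases hS1 : (W (t + 1)).natAbs = (W t).natAbs + 1
      · rw [ackOfMW_succ_of_natAbs_eq hneg hS1]
        omega
      · rw [ackOfMW_succ_of_natAbs_le hneg (by omega)]
        omega

include hW0 hWn hrep hstep in
lemma ackOfMW_last : ackOfMW W n = 1 + (n - #(RSet n W)) := by
  have h := ackOfMW_add_natAbs_add_card_RSet hW0 hrep hstep le_rfl
  rw [hWn] at h
  simp only [Int.natAbs_zero] at h
  have := one_le_ackOfMW (W := W) (i := n)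
  omega

include hW0 hWn hrep hstep in
/-- Every value `ACK_i ≤ m` is skipped over at some later in-order stage. -/
lemma ackOfMW_notMem_V2M : ackOfMW W i ∉ V2M n W := by
  intro hmem
  obtain ⟨-, hm, hnot⟩ := mem_V2M.1 hmem
  have hlt : ackOfMW W i < ackOfMW W n := by
    rw [ackOfMW_last hW0 hWn hrep hstep]; omega
  obtain ⟨t, -, htn, heq, hgt⟩ := ackOfMW_mono.exists_eq_lt_succ hlt
  have hneg : ¬ W (t + 1) < 0 := fun h => by rw [ackOfMW_succ_of_neg h] at hgt; omega
  have hS1 : (W (t + 1)).natAbs ≠ (W t).natAbs + 1 := fun h => by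
    rw [ackOfMW_succ_of_natAbs_eq hneg h] at hgt; omega
  exact hnot (t + 1) (mem_inOrderStages.2 ⟨by omega, htn, hneg, hS1⟩) heq

end Stages

section Rank

variable {α : Type*} [LinearOrder α] {s : Finset α} {v : α}

def rankIn (s : Finset α) (v : α) : ℕ := #(s.filter (· < v))

def nthIn [Inhabited α] (s : Finset α) (k : ℕ) : α :=
  if h : k < #s then s.orderEmbOfFin rfl ⟨k, h⟩ else default

lemma exists_orderEmbOfFin_eq (hv : v ∈ s) : ∃ j, s.orderEmbOfFin rfl j = v := by
  rw [← Set.mem_range, range_orderEmbOfFin]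
  exact hv

lemma rankIn_orderEmbOfFin (j : Fin #s) : rankIn s (s.orderEmbOfFin rfl j) = j := by
  have h : s.filter (· < s.orderEmbOfFin rfl j) =
      (Iio j).map (s.orderEmbOfFin rfl).toEmbedding := by
    ext x
    simp only [mem_filter, mem_map, mem_Iio, RelEmbedding.coe_toEmbedding]
    constructor
    · rintro ⟨hx, hlt⟩
      obtain ⟨i, rfl⟩ := exists_orderEmbOfFin_eq hx
      exact ⟨i, (OrderEmbedding.lt_iff_lt _).1 hlt, rfl⟩
    · rintro ⟨i, hi, rfl⟩
      exact ⟨orderEmbOfFin_mem _ _ _, (OrderEmbedding.lt_iff_lt _).2 hi⟩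
  rw [rankIn, h, card_map, Fin.card_Iio]

lemma rankIn_lt_card (hv : v ∈ s) : rankIn s v < #s := by
  obtain ⟨j, rfl⟩ := exists_orderEmbOfFin_eq hv
  rw [rankIn_orderEmbOfFin]
  exact j.isLt

lemma rankIn_injOn : Set.InjOn (rankIn s) s := by
  intro v hv w hw h
  obtain ⟨i, rfl⟩ := exists_orderEmbOfFin_eq hv
  obtain ⟨j, rfl⟩ := exists_orderEmbOfFin_eq hw
  rw [rankIn_orderEmbOfFin, rankIn_orderEmbOfFin] at h
  rw [Fin.ext h]

variable [Inhabited α] {k : ℕ}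

lemma nthIn_mem (hk : k < #s) : nthIn s k ∈ s := by
  rw [nthIn, dif_pos hk]
  exact orderEmbOfFin_mem _ _ _

lemma rankIn_nthIn (hk : k < #s) : rankIn s (nthIn s k) = k := by
  rw [nthIn, dif_pos hk, rankIn_orderEmbOfFin]

end Rank

lemma seqOf_succ {n : ℕ} (A : Fin n → ℕ) (k : Fin n) : seqOf n A (k + 1) = A k := by
  simp [seqOf]

section Forward

variable {n : ℕ} {W : ℕ → ℤ} {A : Fin n → ℕ} {i t v : ℕ}

lemma seqOf_pos (hA : A ∈ mbufPreimage n W) (h1 : 1 ≤ i) (h2 : i ≤ n) : 0 < seqOf n A i := by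
  rw [seqOf, dif_pos ⟨h1, h2⟩]
  exact hA.1 _

lemma pos_of_mem_received (hA : A ∈ mbufPreimage n W) (hi : i ≤ n)
    (hv : v ∈ received (seqOf n A) i) : 0 < v := by
  obtain ⟨j, h1, h2, rfl⟩ := mem_received.1 hv
  exact seqOf_pos hA h1 (h2.trans hi)

lemma bufSize_eq_natAbs (hW0 : W 0 = 0) (hA : A ∈ mbufPreimage n W) (hi : i ≤ n) :
    bufSize (seqOf n A) i = (W i).natAbs := by
  rcases Nat.eq_zero_or_pos i with rfl | hpos
  · simp [hW0, bufSize_eq_card_buffer, buffer]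
  · rw [← hA.2.2 i hpos hi, mbuf]
    split_ifs <;> simp

variable (hW0 : W 0 = 0) (hWn : W n = 0) (hne : ∀ i, 1 ≤ i → i < n → W i ≠ 0)
  (hrep : ∀ i ∈ RSet n W, (W i).natAbs = (W (i - 1)).natAbs)
  (hstep : ∀ i, 1 ≤ i → i ≤ n → i ∉ RSet n W → (W i).natAbs ≤ (W (i - 1)).natAbs + 1)
  (hA : A ∈ mbufPreimage n W)

include hW0 hWn hne hA in
lemma isRepeat_iff_neg (h1 : 1 ≤ i) (h2 : i ≤ n) : IsRepeat (seqOf n A) i ↔ W i < 0 := by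
  have hm := hA.2.2 i h1 h2
  rcases h2.lt_or_eq with hlt | rfl
  · have := hne i h1 hlt
    rw [mbuf] at hm
    split_ifs at hm with h <;> simp only [h, true_iff, false_iff] <;> omega
  · -- a repeat leaves the buffer unchanged, so it cannot empty it at the last stage
    refine ⟨fun hr => ?_, fun h => by omega⟩
    obtain ⟨t, rfl⟩ := Nat.exists_eq_add_of_le' h1
    have hmem := isRepeat_succ_iff.1 hr
    have hbuf := congrArg Finset.card (buffer_succ_of_isRepeat hr)
    rw [← bufSize_eq_card_buffer, ← bufSize_eq_card_buffer, bufSize_eq_natAbs hW0 hA le_rfl,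
      bufSize_eq_natAbs hW0 hA (by omega), hWn] at hbuf
    rcases Nat.eq_zero_or_pos t with rfl | ht
    · simp at hmem
    · exact absurd (Int.natAbs_eq_zero.1 hbuf.symm) (hne t ht (by omega))

include hW0 hWn hne hA in
lemma card_received_add_card_RSet (hi : i ≤ n) :
    #(received (seqOf n A) i) + #(RSet i W) = i := by
  induction i with
  | zero => simp [RSet]
  | succ t ih =>
    have ih := ih (by omega)
    have hrep_iff := isRepeat_iff_neg hW0 hWn hne hA (by omega) hi
    rw [isRepeat_succ_iff] at hrep_iff
    rw [received_succ, card_RSet_succ]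
    by_cases hneg : W (t + 1) < 0
    · rw [insert_eq_of_mem (hrep_iff.2 hneg), if_pos hneg]
      omega
    · rw [card_insert_of_notMem (mt hrep_iff.1 hneg), if_neg hneg]
      omega

include hW0 hWn hne hrep hstep hA in
lemma ACK_eq_ackOfMW (hi : i ≤ n) : ACK (seqOf n A) i = ackOfMW W i := by
  have h1 := card_received fun v hv => pos_of_mem_received hA hi hv
  have h2 := card_received_add_card_RSet hW0 hWn hne hA hi
  have h3 := ackOfMW_add_natAbs_add_card_RSet hW0 hrep hstep hi
  have h4 := bufSize_eq_natAbs hW0 hA hi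
  have : 0 < ACK (seqOf n A) i := ACK_pos
  omega

include hW0 hWn hne hA in
lemma notMem_received_of_not_neg (ht : t + 1 ≤ n) (hneg : ¬ W (t + 1) < 0) :
    seqOf n A (t + 1) ∉ received (seqOf n A) t :=
  fun h => hneg ((isRepeat_iff_neg hW0 hWn hne hA (by omega) ht).1 (isRepeat_succ_iff.2 h))

include hW0 hWn hne hrep hstep hA in
lemma seqOf_eq_ackOfMW_of_mem_inOrderStages (hi : i ∈ inOrderStages n W) :
    seqOf n A i = ackOfMW W (i - 1) := by
  obtain ⟨h1, h2, hneg, hio⟩ := mem_inOrderStages.1 hi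
  obtain ⟨t, rfl⟩ := Nat.exists_eq_add_of_le' h1
  simp only [Nat.add_sub_cancel] at hio ⊢
  rw [← ACK_eq_ackOfMW hW0 hWn hne hrep hstep hA (by omega)]
  by_contra hne'
  have := ACK_succ_of_ne hne'
  rw [ACK_eq_ackOfMW hW0 hWn hne hrep hstep hA h2,
    ACK_eq_ackOfMW hW0 hWn hne hrep hstep hA (by omega)] at this
  exact (ackOfMW_lt_succ hneg hio).ne' this

include hW0 hWn hne hrep hstep hA in
lemma ackOfMW_lt_seqOf_of_mem_S1M (hi : i ∈ S1M n W) : ackOfMW W i < seqOf n A i := by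
  obtain ⟨h1, h2, hneg, hS1⟩ := mem_S1M.1 hi
  obtain ⟨t, rfl⟩ := Nat.exists_eq_add_of_le' h1
  simp only [Nat.add_sub_cancel] at hS1
  have hack : ACK (seqOf n A) t = ackOfMW W (t + 1) := by
    rw [ACK_eq_ackOfMW hW0 hWn hne hrep hstep hA (by omega), ackOfMW_succ_of_natAbs_eq hneg hS1]
  rw [← hack]
  refine lt_of_le_of_ne (ACK_le_of_notMem_received (seqOf_pos hA h1 h2)
    (notMem_received_of_not_neg hW0 hWn hne hA h2 hneg)) fun he => ?_
  have := ACK_lt_ACK_succ he.symm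
  rw [hack, ACK_eq_ackOfMW hW0 hWn hne hrep hstep hA h2] at this
  exact this.false

include hW0 hWn hne hA in
lemma seqOf_injOn : Set.InjOn (seqOf n A) {i | 1 ≤ i ∧ i ≤ n ∧ ¬ W i < 0} := by
  have hnr : ∀ {u}, 1 ≤ u → u ≤ n → ¬ W u < 0 → ¬ IsRepeat (seqOf n A) u :=
    fun h1 h2 hu hr => hu ((isRepeat_iff_neg hW0 hWn hne hA h1 h2).1 hr)
  rintro s ⟨hs1, hs2, hs⟩ t ⟨ht1, ht2, ht⟩ h
  rcases lt_trichotomy s t with hlt | heq | hlt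
  · exact absurd h (ne_of_not_isRepeat (hnr ht1 ht2 ht) hs1 hlt)
  · exact heq
  · exact absurd h.symm (ne_of_not_isRepeat (hnr hs1 hs2 hs) ht1 hlt)

include hW0 hWn hne hrep hstep hA in
lemma le_of_mem_received_last (hv : v ∈ received (seqOf n A) n) : v ≤ n - #(RSet n W) := by
  have hB : buffer (seqOf n A) n = ∅ := by
    rw [← card_eq_zero, ← bufSize_eq_card_buffer, bufSize_eq_natAbs hW0 hA le_rfl, hWn]
    rfl
  have hlt : v < ACK (seqOf n A) n := by
    by_contra! hle
    have hmem : v ∈ buffer (seqOf n A) n := mem_filter.2 ⟨hv, hle⟩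
    simp [hB] at hmem
  rw [ACK_eq_ackOfMW hW0 hWn hne hrep hstep hA le_rfl, ackOfMW_last hW0 hWn hrep hstep] at hlt
  omega

end Forward

def matchingOf (n : ℕ) (W : ℕ → ℤ) (A : Fin n → ℕ) : Finset (ℕ × ℕ) :=
  (S1M n W).image fun i => (i, seqOf n A i)

noncomputable def rankData (n : ℕ) (W : ℕ → ℤ) (A : Fin n → ℕ) : ∀ i ∈ RSet n W, ℕ :=
  fun i _ => rankIn (buffer (seqOf n A) (i - 1)) (seqOf n A i)

noncomputable def encode (n : ℕ) (W : ℕ → ℤ) (A : Fin n → ℕ) :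
    Finset (ℕ × ℕ) × (∀ i ∈ RSet n W, ℕ) :=
  (matchingOf n W A, rankData n W A)

section Encode

variable {n : ℕ} {W : ℕ → ℤ} {A A' : Fin n → ℕ} {i j : ℕ}

lemma mem_matchingOf : (i, j) ∈ matchingOf n W A ↔ i ∈ S1M n W ∧ seqOf n A i = j := by
  simp [matchingOf]

variable (hW0 : W 0 = 0) (hWn : W n = 0) (hne : ∀ i, 1 ≤ i → i < n → W i ≠ 0)
  (hrep : ∀ i ∈ RSet n W, (W i).natAbs = (W (i - 1)).natAbs)
  (hstep : ∀ i, 1 ≤ i → i ≤ n → i ∉ RSet n W → (W i).natAbs ≤ (W (i - 1)).natAbs + 1)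

include hW0 hWn hne hrep hstep in
lemma seqOf_mem_V2M (hA : A ∈ mbufPreimage n W) (hi : i ∈ S1M n W) : seqOf n A i ∈ V2M n W := by
  obtain ⟨h1, h2, hneg, -⟩ := mem_S1M.1 hi
  refine mem_V2M.2 ⟨seqOf_pos hA h1 h2, le_of_mem_received_last hW0 hWn hne hrep hstep hA
    (mem_received.2 ⟨i, h1, h2, rfl⟩), fun s hs he => ?_⟩
  obtain ⟨hs1, hs2, hsneg, -⟩ := mem_inOrderStages.1 hs
  rw [← seqOf_eq_ackOfMW_of_mem_inOrderStages hW0 hWn hne hrep hstep hA hs] at he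
  obtain rfl := seqOf_injOn hW0 hWn hne hA ⟨hs1, hs2, hsneg⟩ ⟨h1, h2, hneg⟩ he
  exact notMem_inOrderStages_of_mem_S1M hi hs

include hW0 hWn hne hrep hstep in
/-- Every value of `V₂` is received, and its first arrival is an out-of-order one. -/
lemma existsUnique_mem_matchingOf (hA : A ∈ mbufPreimage n W) (hj : j ∈ V2M n W) :
    ∃! i, (i, j) ∈ matchingOf n W A := by
  obtain ⟨hj1, hjm, hjio⟩ := mem_V2M.1 hj
  have hjlt : j < ACK (seqOf n A) n := by
    rw [ACK_eq_ackOfMW hW0 hWn hne hrep hstep hA le_rfl, ackOfMW_last hW0 hWn hrep hstep]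
    omega
  obtain ⟨u, hu1, hun, rfl, hnr⟩ :=
    exists_not_isRepeat_of_mem_received (mem_received_of_lt_ACK hj1 hjlt)
  have hneg : ¬ W u < 0 := mt (isRepeat_iff_neg hW0 hWn hne hA hu1 hun).2 hnr
  have huS1 : u ∈ S1M n W := by
    rcases mem_RSet_or_mem_S1M_or_mem_inOrderStages (W := W) hu1 hun with h | h | h
    · exact absurd (mem_RSet.1 h).2.2 hneg
    · exact h
    · exact absurd (seqOf_eq_ackOfMW_of_mem_inOrderStages hW0 hWn hne hrep hstep hA h).symm
        (hjio u h)
  refine ⟨u, mem_matchingOf.2 ⟨huS1, rfl⟩, fun s hs => ?_⟩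
  obtain ⟨hsS1, hsu⟩ := mem_matchingOf.1 hs
  obtain ⟨hs1, hs2, hsneg, -⟩ := mem_S1M.1 hsS1
  exact seqOf_injOn hW0 hWn hne hA ⟨hs1, hs2, hsneg⟩ ⟨hu1, hun, hneg⟩ hsu

include hW0 hWn hne hrep hstep in
lemma isPerfectMatchingM_matchingOf (hA : A ∈ mbufPreimage n W) :
    IsPerfectMatchingM n W (matchingOf n W A) := by
  refine ⟨fun ⟨i, j⟩ hp => ?_, fun i hi => ⟨seqOf n A i, mem_matchingOf.2 ⟨hi, rfl⟩, ?_⟩,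
    fun j hj => existsUnique_mem_matchingOf hW0 hWn hne hrep hstep hA hj⟩
  · obtain ⟨hi, rfl⟩ := mem_matchingOf.1 hp
    exact ⟨hi, seqOf_mem_V2M hW0 hWn hne hrep hstep hA hi,
      ackOfMW_lt_seqOf_of_mem_S1M hW0 hWn hne hrep hstep hA hi⟩
  · exact fun j hj => (mem_matchingOf.1 hj).2.symm

include hW0 hWn hne in
lemma seqOf_mem_buffer (hA : A ∈ mbufPreimage n W) (hi : i ∈ RSet n W) :
    seqOf n A i ∈ buffer (seqOf n A) (i - 1) := by
  obtain ⟨h1, h2, hneg⟩ := mem_RSet.1 hi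
  have hr := (isRepeat_iff_neg hW0 hWn hne hA h1 h2).2 hneg
  obtain ⟨t, rfl⟩ := Nat.exists_eq_add_of_le' h1
  exact mem_filter.2 ⟨isRepeat_succ_iff.1 hr, hA.2.1 _ h1 h2 hr⟩

include hW0 hWn hne hrep in
lemma rankData_lt (hA : A ∈ mbufPreimage n W) (hi : i ∈ RSet n W) :
    rankData n W A i hi < (W i).natAbs := by
  have hcard : #(buffer (seqOf n A) (i - 1)) = (W i).natAbs := by
    rw [← bufSize_eq_card_buffer, bufSize_eq_natAbs hW0 hA (by grind [mem_RSet]), hrep i hi]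
  exact hcard ▸ rankIn_lt_card (seqOf_mem_buffer hW0 hWn hne hA hi)

include hW0 hWn hne hrep hstep in
/-- Stage by stage, the matching recovers the out-of-order packets, `W` the in-order ones, and
the ranks the repeats. -/
lemma seqOf_eq_of_encode_eq (hA : A ∈ mbufPreimage n W) (hA' : A' ∈ mbufPreimage n W)
    (h : encode n W A = encode n W A') (hi : 1 ≤ i) (hin : i ≤ n) :
    seqOf n A i = seqOf n A' i := by
  induction i using Nat.strong_induction_on with
  | _ i ih =>
  rcases mem_RSet_or_mem_S1M_or_mem_inOrderStages (W := W) hi hin with hR | hS1 | hio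
  · have hrec : received (seqOf n A) (i - 1) = received (seqOf n A') (i - 1) :=
      received_congr fun j hj1 hj2 => ih j (by omega) hj1 (by omega)
    have hbuf : buffer (seqOf n A) (i - 1) = buffer (seqOf n A') (i - 1) := buffer_congr hrec
    have hrank := congrFun (congrFun (congrArg Prod.snd h) i) hR
    simp only [encode, rankData, hbuf] at hrank
    exact rankIn_injOn (hbuf ▸ seqOf_mem_buffer hW0 hWn hne hA hR)
      (seqOf_mem_buffer hW0 hWn hne hA' hR) hrank
  · have hM : matchingOf n W A = matchingOf n W A' := congrArg Prod.fst h
    have hmem : (i, seqOf n A i) ∈ matchingOf n W A' := hM ▸ mem_matchingOf.2 ⟨hS1, rfl⟩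
    exact (mem_matchingOf.1 hmem).2.symm
  · rw [seqOf_eq_ackOfMW_of_mem_inOrderStages hW0 hWn hne hrep hstep hA hio,
      seqOf_eq_ackOfMW_of_mem_inOrderStages hW0 hWn hne hrep hstep hA' hio]

include hW0 hWn hne hrep hstep in
lemma encode_injOn : Set.InjOn (encode n W) (mbufPreimage n W) := fun A hA A' hA' h =>
  funext fun k => by
    rw [← seqOf_succ A, ← seqOf_succ A',
      seqOf_eq_of_encode_eq hW0 hWn hne hrep hstep hA hA' h (by omega) (by omega)]

end Encode

noncomputable def partner (M : Finset (ℕ × ℕ)) (i : ℕ) : ℕ := sInf {j | (i, j) ∈ M}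

noncomputable def matchedUpTo (n : ℕ) (W : ℕ → ℤ) (M : Finset (ℕ × ℕ)) (t : ℕ) : Finset ℕ :=
  ((S1M n W).filter (· ≤ t)).image (partner M)

noncomputable def decodeReceived (n : ℕ) (W : ℕ → ℤ) (M : Finset (ℕ × ℕ)) (t : ℕ) :
    Finset ℕ :=
  Icc 1 (ackOfMW W t - 1) ∪ matchedUpTo n W M t

noncomputable def decodeBuffer (n : ℕ) (W : ℕ → ℤ) (M : Finset (ℕ × ℕ)) (t : ℕ) : Finset ℕ :=
  (decodeReceived n W M t).filter (ackOfMW W t ≤ ·)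

noncomputable def decodeSeq (n : ℕ) (W : ℕ → ℤ) (M : Finset (ℕ × ℕ))
    (c : ∀ i ∈ RSet n W, ℕ) (i : ℕ) : ℕ :=
  if h : i ∈ RSet n W then nthIn (decodeBuffer n W M (i - 1)) (c i h)
  else if i ∈ S1M n W then partner M i else ackOfMW W (i - 1)

noncomputable def decode (n : ℕ) (W : ℕ → ℤ) (M : Finset (ℕ × ℕ)) (c : ∀ i ∈ RSet n W, ℕ) :
    Fin n → ℕ :=
  fun k => decodeSeq n W M c (k + 1)

section Matching

variable {n : ℕ} {W : ℕ → ℤ} {M : Finset (ℕ × ℕ)} {i j t v : ℕ}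

lemma mk_partner_mem (hM : IsPerfectMatchingM n W M) (hi : i ∈ S1M n W) :
    (i, partner M i) ∈ M := by
  obtain ⟨j, hj, huniq⟩ := hM.2.1 i hi
  have hset : {j' | (i, j') ∈ M} = {j} := Set.ext fun x => ⟨huniq x, fun h => h ▸ hj⟩
  rw [partner, hset, csInf_singleton]
  exact hj

lemma eq_partner_of_mem (hM : IsPerfectMatchingM n W M) (h : (i, j) ∈ M) : j = partner M i :=
  (hM.2.1 i (hM.1 _ h).1).unique h (mk_partner_mem hM (hM.1 _ h).1)

lemma partner_mem_V2M (hM : IsPerfectMatchingM n W M) (hi : i ∈ S1M n W) :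
    partner M i ∈ V2M n W :=
  (hM.1 _ (mk_partner_mem hM hi)).2.1

lemma ackOfMW_lt_partner (hM : IsPerfectMatchingM n W M) (hi : i ∈ S1M n W) :
    ackOfMW W i < partner M i :=
  (hM.1 _ (mk_partner_mem hM hi)).2.2

lemma partner_injOn (hM : IsPerfectMatchingM n W M) : Set.InjOn (partner M) (S1M n W) :=
  fun _ hi _ hi' h => (hM.2.2 _ (partner_mem_V2M hM hi)).unique (mk_partner_mem hM hi)
    (h ▸ mk_partner_mem hM hi')

lemma mem_matchedUpTo : v ∈ matchedUpTo n W M t ↔ ∃ s ∈ S1M n W, s ≤ t ∧ partner M s = v := by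
  simp [matchedUpTo, and_assoc]

lemma matchedUpTo_zero : matchedUpTo n W M 0 = ∅ := by
  ext v
  simp only [mem_matchedUpTo, mem_S1M, notMem_empty, iff_false]
  omega

lemma matchedUpTo_succ_of_notMem (h : t + 1 ∉ S1M n W) :
    matchedUpTo n W M (t + 1) = matchedUpTo n W M t := by
  ext v
  simp only [mem_matchedUpTo]
  refine exists_congr fun s => ⟨fun ⟨hs, hst, hv⟩ => ⟨hs, ?_, hv⟩, fun ⟨hs, hst, hv⟩ =>
    ⟨hs, by omega, hv⟩⟩
  rcases hst.lt_or_eq with hlt | rfl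
  · omega
  · exact absurd hs h

lemma matchedUpTo_succ_of_mem (h : t + 1 ∈ S1M n W) :
    matchedUpTo n W M (t + 1) = insert (partner M (t + 1)) (matchedUpTo n W M t) := by
  ext v
  simp only [mem_insert, mem_matchedUpTo]
  constructor
  · rintro ⟨s, hs, hst, rfl⟩
    rcases hst.lt_or_eq with hlt | rfl
    · exact Or.inr ⟨s, hs, by omega, rfl⟩
    · exact Or.inl rfl
  · rintro (rfl | ⟨s, hs, hst, rfl⟩)
    · exact ⟨t + 1, h, le_rfl, rfl⟩
    · exact ⟨s, hs, by omega, rfl⟩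

lemma matchedUpTo_subset_V2M (hM : IsPerfectMatchingM n W M) : matchedUpTo n W M t ⊆ V2M n W := by
  intro v hv
  obtain ⟨s, hs, -, rfl⟩ := mem_matchedUpTo.1 hv
  exact partner_mem_V2M hM hs

lemma pos_of_mem_decodeReceived (hM : IsPerfectMatchingM n W M)
    (hv : v ∈ decodeReceived n W M t) : 0 < v := by
  rw [decodeReceived, mem_union, mem_Icc] at hv
  exact hv.elim (fun h => h.1) fun h => (mem_V2M.1 (matchedUpTo_subset_V2M hM h)).1

variable (hW0 : W 0 = 0) (hWn : W n = 0)
  (hrep : ∀ i ∈ RSet n W, (W i).natAbs = (W (i - 1)).natAbs)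
  (hstep : ∀ i, 1 ≤ i → i ≤ n → i ∉ RSet n W → (W i).natAbs ≤ (W (i - 1)).natAbs + 1)
  (hM : IsPerfectMatchingM n W M)

include hW0 hWn hrep hstep hM in
/-- The values jumped over by the acknowledgement at an in-order stage lie in `V₂`, so they are
matched to earlier stages. -/
lemma mem_matchedUpTo_of_lt_of_lt (hio : t + 1 ∈ inOrderStages n W) {k : ℕ}
    (h1 : ackOfMW W t < k) (h2 : k < ackOfMW W (t + 1)) : k ∈ matchedUpTo n W M t := by
  have htn := (mem_inOrderStages.1 hio).2.1
  have hkV2 : k ∈ V2M n W := by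
    refine mem_V2M.2 ⟨by omega, ?_, fun s hs he => ?_⟩
    · have := ackOfMW_mono (W := W) htn
      rw [ackOfMW_last hW0 hWn hrep hstep] at this
      omega
    · rcases le_or_gt (s - 1) t with hst | hst
      · have := ackOfMW_mono (W := W) hst; omega
      · have := ackOfMW_mono (W := W) (show t + 1 ≤ s - 1 by omega); omega
  obtain ⟨s, hs, -⟩ := hM.2.2 k hkV2
  obtain ⟨hsS1, -, hlt⟩ := hM.1 _ hs
  refine mem_matchedUpTo.2 ⟨s, hsS1, ?_, (eq_partner_of_mem hM hs).symm⟩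
  by_contra! hts
  have := ackOfMW_mono (W := W) (show t + 1 ≤ s by omega)
  simp only at hlt
  omega

end Matching

section Decode

variable {n : ℕ} {W : ℕ → ℤ} {M : Finset (ℕ × ℕ)} {c : ∀ i ∈ RSet n W, ℕ} {f : ℕ → ℕ}
  {i t : ℕ}

lemma decodeSeq_of_mem_RSet (h : i ∈ RSet n W) :
    decodeSeq n W M c i = nthIn (decodeBuffer n W M (i - 1)) (c i h) := by
  rw [decodeSeq, dif_pos h]

lemma decodeSeq_of_mem_S1M (h : i ∈ S1M n W) : decodeSeq n W M c i = partner M i := by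
  rw [decodeSeq, dif_neg fun hR => (mem_S1M.1 h).2.2.1 (mem_RSet.1 hR).2.2, if_pos h]

lemma decodeSeq_of_mem_inOrderStages (h : i ∈ inOrderStages n W) :
    decodeSeq n W M c i = ackOfMW W (i - 1) := by
  rw [decodeSeq, dif_neg fun hR => (mem_inOrderStages.1 h).2.2.1 (mem_RSet.1 hR).2.2,
    if_neg (notMem_inOrderStages_of_mem_S1M · h)]

lemma seqOf_decode (h1 : 1 ≤ i) (h2 : i ≤ n) :
    seqOf n (decode n W M c) i = decodeSeq n W M c i := by
  simp [seqOf, decode, h1, h2, Nat.sub_add_cancel h1]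

lemma received_seqOf_decode (ht : t ≤ n) :
    received (seqOf n (decode n W M c)) t = received (decodeSeq n W M c) t :=
  received_congr fun _ h1 h2 => seqOf_decode h1 (h2.trans ht)

lemma matchingOf_decode (hM : IsPerfectMatchingM n W M) : matchingOf n W (decode n W M c) = M := by
  ext ⟨i, j⟩
  rw [mem_matchingOf]
  constructor
  · rintro ⟨hi, rfl⟩
    obtain ⟨h1, h2, -⟩ := mem_S1M.1 hi
    rw [seqOf_decode h1 h2, decodeSeq_of_mem_S1M hi]
    exact mk_partner_mem hM hi
  · intro h
    have hi := (hM.1 _ h).1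
    obtain ⟨h1, h2, -⟩ := mem_S1M.1 hi
    rw [seqOf_decode h1 h2, decodeSeq_of_mem_S1M hi, eq_partner_of_mem hM h]
    exact ⟨hi, rfl⟩

variable (hW0 : W 0 = 0) (hWn : W n = 0)
  (hrep : ∀ i ∈ RSet n W, (W i).natAbs = (W (i - 1)).natAbs)
  (hstep : ∀ i, 1 ≤ i → i ≤ n → i ∉ RSet n W → (W i).natAbs ≤ (W (i - 1)).natAbs + 1)
  (hM : IsPerfectMatchingM n W M)

include hW0 hWn hrep hstep hM in
lemma ACK_eq_ackOfMW_of_received_eq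
    (hr : received f t = decodeReceived n W M t) :
    ACK f t = ackOfMW W t := by
  rw [ACK_eq_iff, hr, decodeReceived, mem_union, mem_Icc, not_or]
  refine ⟨one_le_ackOfMW, ⟨by omega, fun h => ackOfMW_notMem_V2M hW0 hWn hrep hstep
    (matchedUpTo_subset_V2M hM h)⟩, fun l hl hlt => mem_union_left _ (mem_Icc.2 ⟨hl, by omega⟩)⟩

include hW0 hWn hrep hstep hM in
lemma buffer_eq_decodeBuffer (hr : received f t = decodeReceived n W M t) :
    buffer f t = decodeBuffer n W M t := by
  rw [buffer, ACK_eq_ackOfMW_of_received_eq hW0 hWn hrep hstep hM hr, hr, decodeBuffer]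

include hW0 hWn hrep hstep hM in
lemma card_decodeBuffer (ht : t ≤ n)
    (hr : received f t = decodeReceived n W M t)
    (hcard : #(received f t) + #(RSet t W) = t) :
    #(decodeBuffer n W M t) = (W t).natAbs := by
  have h1 := card_received fun v hv => pos_of_mem_decodeReceived hM (hr ▸ hv)
  rw [bufSize_eq_card_buffer, buffer_eq_decodeBuffer hW0 hWn hrep hstep hM hr,
    ACK_eq_ackOfMW_of_received_eq hW0 hWn hrep hstep hM hr] at h1
  have h2 := ackOfMW_add_natAbs_add_card_RSet hW0 hrep hstep ht
  have := one_le_ackOfMW (W := W) (i := t)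
  omega

variable (hc : ∀ i hi, c i hi < (W i).natAbs)

include hW0 hWn hrep hstep hM hc in
lemma decodeSeq_succ_mem_decodeBuffer (hR : t + 1 ∈ RSet n W)
    (hr : received (decodeSeq n W M c) t = decodeReceived n W M t)
    (hcard : #(received (decodeSeq n W M c) t) + #(RSet t W) = t) :
    decodeSeq n W M c (t + 1) ∈ decodeBuffer n W M t := by
  have hlt := hc _ hR
  rw [hrep _ hR, Nat.add_sub_cancel,
    ← card_decodeBuffer hW0 hWn hrep hstep hM (by grind [mem_RSet]) hr hcard] at hlt
  rw [decodeSeq_of_mem_RSet hR, Nat.add_sub_cancel]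
  exact nthIn_mem hlt

include hM in
lemma decodeSeq_succ_notMem_received (ht : t + 1 ≤ n) (hR : t + 1 ∉ RSet n W)
    (hr : received f t = decodeReceived n W M t) :
    decodeSeq n W M c (t + 1) ∉ received f t := by
  rw [hr, decodeReceived, mem_union, mem_Icc, not_or]
  rcases mem_RSet_or_mem_S1M_or_mem_inOrderStages (W := W) (by omega : 1 ≤ t + 1) ht
    with hR' | hS1 | hio
  · exact absurd hR' hR
  · obtain ⟨-, -, hneg, habs⟩ := mem_S1M.1 hS1
    have hlt := ackOfMW_lt_partner hM hS1
    rw [ackOfMW_succ_of_natAbs_eq hneg habs] at hlt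
    rw [decodeSeq_of_mem_S1M hS1]
    refine ⟨by omega, fun h => ?_⟩
    obtain ⟨s, hs, hst, he⟩ := mem_matchedUpTo.1 h
    exact absurd (partner_injOn hM hs hS1 he) (by omega)
  · rw [decodeSeq_of_mem_inOrderStages hio, Nat.add_sub_cancel]
    exact ⟨by omega, fun h => (mem_V2M.1 (matchedUpTo_subset_V2M hM h)).2.2 _ hio rfl⟩

include hW0 hWn hrep hstep hM in
lemma received_succ_of_mem_inOrderStages (hio : t + 1 ∈ inOrderStages n W)
    (hr : received (decodeSeq n W M c) t = decodeReceived n W M t) :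
    received (decodeSeq n W M c) (t + 1) =
      decodeReceived n W M (t + 1) := by
  have hlt : ackOfMW W t < ackOfMW W (t + 1) := by
    obtain ⟨-, -, hneg, habs⟩ := mem_inOrderStages.1 hio
    exact ackOfMW_lt_succ hneg habs
  rw [received_succ, decodeSeq_of_mem_inOrderStages hio, Nat.add_sub_cancel, hr, decodeReceived,
    decodeReceived, matchedUpTo_succ_of_notMem (notMem_inOrderStages_of_mem_S1M · hio)]
  ext x
  simp only [mem_insert, mem_union, mem_Icc]
  have := one_le_ackOfMW (W := W) (i := t)
  constructor
  · rintro (rfl | ⟨h1, h2⟩ | h) <;> first | exact Or.inr h | exact Or.inl ⟨by omega, by omega⟩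
  · rintro (⟨h1, h2⟩ | h)
    · rcases lt_trichotomy x (ackOfMW W t) with h3 | h3 | h3
      · exact Or.inr (Or.inl ⟨h1, by omega⟩)
      · exact Or.inl h3
      · exact Or.inr (Or.inr
          (mem_matchedUpTo_of_lt_of_lt hW0 hWn hrep hstep hM hio h3 (by omega)))
    · exact Or.inr (Or.inr h)

include hW0 hWn hrep hstep hM hc in
lemma received_decodeSeq (ht : t ≤ n) :
    received (decodeSeq n W M c) t = decodeReceived n W M t ∧
      #(received (decodeSeq n W M c) t) + #(RSet t W) = t := by
  induction t with
  | zero => simp [decodeReceived, matchedUpTo_zero, ackOfMW, RSet]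
  | succ t ih =>
    obtain ⟨hr, hcard⟩ := ih (by omega)
    by_cases hR : t + 1 ∈ RSet n W
    · have hneg := (mem_RSet.1 hR).2.2
      have hmem := decodeSeq_succ_mem_decodeBuffer hW0 hWn hrep hstep hM hc hR hr hcard
      rw [received_succ, insert_eq_of_mem (hr ▸ mem_of_mem_filter _ hmem), card_RSet_succ,
        if_pos hneg, decodeReceived, ackOfMW_succ_of_neg hneg,
        matchedUpTo_succ_of_notMem fun h => (mem_S1M.1 h).2.2.1 hneg, ← decodeReceived]
      exact ⟨hr, by omega⟩
    · have hneg : ¬ W (t + 1) < 0 := fun h => hR (mem_RSet.2 ⟨by omega, ht, h⟩)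
      refine ⟨?_, ?_⟩
      · rcases mem_RSet_or_mem_S1M_or_mem_inOrderStages (W := W) (by omega : 1 ≤ t + 1) ht
          with hR' | hS1 | hio
        · exact absurd hR' hR
        · rw [received_succ, decodeSeq_of_mem_S1M hS1, hr, decodeReceived, decodeReceived,
            matchedUpTo_succ_of_mem hS1,
            ackOfMW_succ_of_natAbs_eq hneg (mem_S1M.1 hS1).2.2.2, ← union_insert]
        · exact received_succ_of_mem_inOrderStages hW0 hWn hrep hstep hM hio hr
      · rw [received_succ, card_insert_of_notMem
          (decodeSeq_succ_notMem_received hM ht hR hr), card_RSet_succ,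
          if_neg hneg]
        omega

include hW0 hWn hrep hstep hM hc in
lemma buffer_seqOf_decode (hi : i ≤ n) :
    buffer (seqOf n (decode n W M c)) i = decodeBuffer n W M i := by
  rw [buffer_congr (received_seqOf_decode hi)]
  exact buffer_eq_decodeBuffer hW0 hWn hrep hstep hM
    (received_decodeSeq hW0 hWn hrep hstep hM hc hi).1

include hW0 hWn hrep hstep hM hc in
lemma isRepeat_decode_iff (h1 : 1 ≤ i) (h2 : i ≤ n) :
    IsRepeat (seqOf n (decode n W M c)) i ↔ i ∈ RSet n W := by
  obtain ⟨t, rfl⟩ := Nat.exists_eq_add_of_le' h1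
  obtain ⟨hr, hcard⟩ := received_decodeSeq hW0 hWn hrep hstep hM hc (t := t) (by omega)
  rw [isRepeat_succ_iff, seqOf_decode h1 h2, received_seqOf_decode (by omega)]
  refine ⟨fun h => by_contra fun hR => decodeSeq_succ_notMem_received hM h2 hR hr h, fun hR => ?_⟩
  have hmem := decodeSeq_succ_mem_decodeBuffer hW0 hWn hrep hstep hM hc hR hr hcard
  exact hr ▸ mem_of_mem_filter _ hmem

include hW0 hWn hrep hstep hM hc in
lemma decode_mem_mbufPreimage : decode n W M c ∈ mbufPreimage n W := by
  refine ⟨fun k => ?_, fun i h1 h2 hrep' => ?_, fun i h1 h2 => ?_⟩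
  · have hmem : decodeSeq n W M c (k + 1) ∈ received (decodeSeq n W M c) (k + 1) :=
      mem_received.2 ⟨k + 1, by omega, le_rfl, rfl⟩
    rw [(received_decodeSeq hW0 hWn hrep hstep hM hc k.isLt).1] at hmem
    exact pos_of_mem_decodeReceived hM hmem
  · have hR := (isRepeat_decode_iff hW0 hWn hrep hstep hM hc h1 h2).1 hrep'
    obtain ⟨t, rfl⟩ := Nat.exists_eq_add_of_le' h1
    obtain ⟨hr, hcard⟩ := received_decodeSeq hW0 hWn hrep hstep hM hc (t := t) (by omega)
    rw [Nat.add_sub_cancel, ACK_congr (received_seqOf_decode (by omega)),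
      ACK_eq_ackOfMW_of_received_eq hW0 hWn hrep hstep hM hr, seqOf_decode h1 h2]
    exact (mem_filter.1 (decodeSeq_succ_mem_decodeBuffer hW0 hWn hrep hstep hM hc hR hr hcard)).2
  · obtain ⟨hr, hcard⟩ := received_decodeSeq hW0 hWn hrep hstep hM hc h2
    have hB : bufSize (seqOf n (decode n W M c)) i = (W i).natAbs := by
      rw [bufSize_eq_card_buffer, buffer_seqOf_decode hW0 hWn hrep hstep hM hc h2,
        card_decodeBuffer hW0 hWn hrep hstep hM h2 hr hcard]
    rw [mbuf, hB]
    split_ifs with h <;> rw [isRepeat_decode_iff hW0 hWn hrep hstep hM hc h1 h2, mem_RSet] at h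
      <;> omega

include hW0 hWn hrep hstep hM hc in
lemma rankData_decode : rankData n W (decode n W M c) = c := by
  funext i hi
  obtain ⟨h1, h2, -⟩ := mem_RSet.1 hi
  have hlt := hc i hi
  rw [hrep i hi, ← card_decodeBuffer hW0 hWn hrep hstep hM (by omega)
    (received_decodeSeq hW0 hWn hrep hstep hM hc (t := i - 1) (by omega)).1
    (received_decodeSeq hW0 hWn hrep hstep hM hc (t := i - 1) (by omega)).2] at hlt
  rw [rankData, buffer_seqOf_decode hW0 hWn hrep hstep hM hc (by omega), seqOf_decode h1 h2,
    decodeSeq_of_mem_RSet hi, rankIn_nthIn hlt]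

end Decode

def rankChoices (n : ℕ) (W : ℕ → ℤ) : Finset (∀ i ∈ RSet n W, ℕ) :=
  (RSet n W).pi fun i => range (W i).natAbs

section Count

variable {n : ℕ} {W : ℕ → ℤ}

lemma card_rankChoices : #(rankChoices n W) = ∏ i ∈ RSet n W, (W i).natAbs := by
  simp [rankChoices, card_pi]

lemma mem_rankChoices {c : ∀ i ∈ RSet n W, ℕ} :
    c ∈ rankChoices n W ↔ ∀ i hi, c i hi < (W i).natAbs := by
  simp [rankChoices, mem_pi]

lemma bijOn_encode (hW0 : W 0 = 0) (hWn : W n = 0) (hne : ∀ i, 1 ≤ i → i < n → W i ≠ 0)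
    (hrep : ∀ i ∈ RSet n W, (W i).natAbs = (W (i - 1)).natAbs)
    (hstep : ∀ i, 1 ≤ i → i ≤ n → i ∉ RSet n W → (W i).natAbs ≤ (W (i - 1)).natAbs + 1) :
    Set.BijOn (encode n W) (mbufPreimage n W)
      ({M | IsPerfectMatchingM n W M} ×ˢ rankChoices n W) := by
  refine ⟨fun A hA => ?_, encode_injOn hW0 hWn hne hrep hstep, fun ⟨M, c⟩ ⟨hM, hc⟩ => ?_⟩
  · exact ⟨isPerfectMatchingM_matchingOf hW0 hWn hne hrep hstep hA,
      mem_rankChoices.2 fun i hi => rankData_lt hW0 hWn hne hrep hA hi⟩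
  · have hc := mem_rankChoices.1 hc
    exact ⟨decode n W M c, decode_mem_mbufPreimage hW0 hWn hrep hstep hM hc,
      Prod.ext (matchingOf_decode hM) (rankData_decode hW0 hWn hrep hstep hM hc)⟩

end Count

end PacketBuffer

open PacketBuffer in
/-- Counting preimages of modified buffer sequences:
`|B̄⁻¹(W)| = |MATCH(G(W))| · ∏_{i ∈ R} |W_i|`. In particular `B̄⁻¹(W) ≠ ∅` iff
`G(W)` has a perfect matching. -/
theorem mbuf_preimage_count (n : ℕ) (W : ℕ → ℤ)
    (hW0 : W 0 = 0) (hWn : W n = 0)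
    (hne : ∀ i, 1 ≤ i → i < n → W i ≠ 0)
    (hrep : ∀ i ∈ RSet n W, (W i).natAbs = (W (i - 1)).natAbs)
    (hstep : ∀ i, 1 ≤ i → i ≤ n → i ∉ RSet n W →
      (W i).natAbs ≤ (W (i - 1)).natAbs + 1) :
    (mbufPreimage n W).ncard =
      {M : Finset (ℕ × ℕ) | IsPerfectMatchingM n W M}.ncard *
        ∏ i ∈ RSet n W, (W i).natAbs ∧
    ((mbufPreimage n W).Nonempty ↔
      ∃ M : Finset (ℕ × ℕ), IsPerfectMatchingM n W M) := by
  refine ⟨?_, ⟨fun ⟨A, hA⟩ => ?_, fun ⟨M, hM⟩ => ?_⟩⟩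
  · rw [(bijOn_encode hW0 hWn hne hrep hstep).ncard_eq, Set.ncard_prod, Set.ncard_coe_finset,
      card_rankChoices]
  · exact ⟨_, isPerfectMatchingM_matchingOf hW0 hWn hne hrep hstep hA⟩
  · have hc : ∀ i (hi : i ∈ RSet n W), 0 < (W i).natAbs := fun i hi =>
      Int.natAbs_pos.2 (mem_RSet.1 hi).2.2.ne
    exact ⟨_, decode_mem_mbufPreimage hW0 hWn hrep hstep hM (c := fun _ _ => 0) hc⟩
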